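/- arXiv:2211.16892 — 2 statements merged into one kernel-verified Lean document; each statement's English description precedes it below -/
import Mathlib

section
/- Let f : ℕ → ℂ, let N be a positive real parameter, and let S ⊆ [N/2, N] ∩ ℕ be a finite set. Then |∑_{n ∈ S} f(n)| ≤ (1/log N) ∑_{n ∈ S} |f(n)| + (1/log N) |∑_{n, m : n·m ∈ S} f(n·m) Λ(m)|, where Λ is the von Mangoldt function and the double sum runs over all pairs (n,m) of positive integers with n·m ∈ S. -/
/-!
Since `log N = (log N - log n) + ∑_{m ∣ n} Λ(m)`, multiplying `∑_{n ∈ S} f(n)` by `log N`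
splits it into `∑_{n ∈ S} f(n) (log N - log n)`, whose weights lie in `[0, log 2] ⊆ [0, 1]`
for `n ∈ [N/2, N]`, and the von Mangoldt double sum.
-/

open Finset ArithmeticFunction

lemma abs_log_sub_log_le_one {N x : ℝ} (hNx : N / 2 ≤ x) (hxN : x ≤ N) :
    |Real.log N - Real.log x| ≤ 1 := by
  rcases (show 0 ≤ N by linarith).eq_or_lt with rfl | hN
  · simp [le_antisymm hxN (by simpa using hNx)]
  have hx : 0 < x := by linarith
  rw [← Real.log_div hN.ne' hx.ne', abs_of_nonneg (Real.log_nonneg ((one_le_div hx).2 hxN))]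
  calc Real.log (N / x) ≤ Real.log 2 :=
        Real.log_le_log (by positivity) ((div_le_iff₀ hx).2 (by linarith))
    _ ≤ 1 := Real.log_two_lt_d9.le.trans (by norm_num)

lemma sum_mul_log_eq (f : ℕ → ℂ) (N : ℝ) (S : Finset ℕ) :
    (∑ n ∈ S, f n) * (Real.log N : ℂ) =
      ∑ n ∈ S, f n * ((Real.log N - Real.log n : ℝ) : ℂ) +
        ∑ k ∈ S, ∑ m ∈ k.divisors, f k * (vonMangoldt m : ℂ) := by
  rw [sum_mul, ← sum_add_distrib]
  refine sum_congr rfl fun n _ => ?_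
  rw [← mul_sum, ← mul_add, ← Complex.ofReal_sum, vonMangoldt_sum, ← Complex.ofReal_add,
    sub_add_cancel]

lemma norm_sum_mul_le_sum_norm {f : ℕ → ℂ} {c : ℕ → ℝ} {S : Finset ℕ}
    (hc : ∀ n ∈ S, |c n| ≤ 1) :
    ‖∑ n ∈ S, f n * (c n : ℂ)‖ ≤ ∑ n ∈ S, ‖f n‖ :=
  (norm_sum_le _ _).trans <| sum_le_sum fun n hn => by
    rw [norm_mul, Complex.norm_real, Real.norm_eq_abs]
    exact mul_le_of_le_one_right (norm_nonneg _) (hc n hn)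

-- The double sum over pairs `(n, m)` with `n * m ∈ S` is written as a sum over `k ∈ S` and
-- divisors `m ∣ k`, with `f (n * m) = f k`.
theorem stmt0_general (f : ℕ → ℂ) (N : ℝ) (hN : 2 ≤ N) (S : Finset ℕ)
    (hS : ∀ n ∈ S, N / 2 ≤ (n : ℝ) ∧ (n : ℝ) ≤ N) :
    ‖∑ n ∈ S, f n‖ ≤
      (1 / Real.log N) * ∑ n ∈ S, ‖f n‖ +
      (1 / Real.log N) *
        ‖∑ k ∈ S, ∑ m ∈ k.divisors, f k * (ArithmeticFunction.vonMangoldt m : ℂ)‖ := by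
  have hlog : 0 < Real.log N := Real.log_pos (by linarith)
  rw [one_div_mul_eq_div, one_div_mul_eq_div, ← add_div, le_div_iff₀ hlog]
  calc ‖∑ n ∈ S, f n‖ * Real.log N = ‖(∑ n ∈ S, f n) * (Real.log N : ℂ)‖ := by
        rw [norm_mul, Complex.norm_real, Real.norm_of_nonneg hlog.le]
    _ ≤ ‖∑ n ∈ S, f n * ((Real.log N - Real.log n : ℝ) : ℂ)‖ +
          ‖∑ k ∈ S, ∑ m ∈ k.divisors, f k * (vonMangoldt m : ℂ)‖ := by
        rw [sum_mul_log_eq]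
        exact norm_add_le _ _
    _ ≤ _ := by
        gcongr
        exact norm_sum_mul_le_sum_norm fun n hn =>
          abs_log_sub_log_le_one (hS n hn).1 (hS n hn).2

/-- Montgomery–Vaughan type decomposition: for `f : ℕ → ℂ`, a parameter `N ≥ 2` and a
finite set `S ⊆ [N/2, N] ∩ ℕ`, we have
`|∑_{n ∈ S} f n| ≤ (1/log N) ∑_{n ∈ S} |f n| + (1/log N) |∑_{nm ∈ S} f(nm) Λ(m)|`,
where the double sum over pairs `(n,m)` with `n·m ∈ S` is expressed as a sum over
`k ∈ S` and divisors `m` of `k` (so that `n = k/m` and `f(n·m) = f k`). -/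
theorem stmt0 (f : ℕ → ℂ) (N : ℝ) (hN : 2 ≤ N) (S : Finset ℕ)
    (hSpos : ∀ n ∈ S, 0 < n)
    (hS : ∀ n ∈ S, N / 2 ≤ (n : ℝ) ∧ (n : ℝ) ≤ N) :
    ‖∑ n ∈ S, f n‖ ≤
      (1 / Real.log N) * ∑ n ∈ S, ‖f n‖ +
      (1 / Real.log N) *
        ‖∑ k ∈ S, ∑ m ∈ k.divisors, f k * (ArithmeticFunction.vonMangoldt m : ℂ)‖ :=
  stmt0_general f N hN S hS
end

section
/- Let y' < y be real numbers with 1 ≤ y', let M and x be real numbers with y ≤ M < x, and let n be a positive integer with M < n ≤ x all of whose prime factors lie in [y', y]. Then there exists a unique triple (u, v, p) of positive integers u, v and a prime p such that: n = u·v; y' ≤ p ≤ y and p divides v; every prime factor of u lies in [y', p]; M < v ≤ M·p; and every prime factor of v lies in [p, y]. -/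
/-!
Write `n = u * v` where `v` collects the largest prime factors of `n` (with multiplicity),
and `p` is the smallest prime dividing `v`. For existence, strip the smallest primes off `n`
into `u` as long as the remaining cofactor still exceeds `M`. For uniqueness, two such
"upper parts" `v₁, v₂` of the same `n` are comparable under divisibility; a proper divisor `v₁`
of `v₂` satisfies `v₁ * p₂ ≤ v₂ ≤ M * p₂`, contradicting `M < v₁`. Finally `p = v.minFac` and
`u = n / v`.
-/

namespace Nat

lemma mem_primeFactors_of_factorization_lt {u₁ v₁ u₂ v₂ r : ℕ} (h : u₁ * v₁ = u₂ * v₂)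
    (h0 : u₁ * v₁ ≠ 0) (hr : v₂.factorization r < v₁.factorization r) :
    r ∈ u₂.primeFactors ∧ r ∈ v₁.primeFactors := by
  obtain ⟨hu₁, hv₁⟩ := mul_ne_zero_iff.mp h0
  obtain ⟨hu₂, hv₂⟩ := mul_ne_zero_iff.mp (h ▸ h0)
  have hsum := congrArg (fun k => k.factorization r) h
  simp only [factorization_mul hu₁ hv₁, factorization_mul hu₂ hv₂, Finsupp.add_apply] at hsum
  simp only [← support_factorization, Finsupp.mem_support_iff]
  omega

theorem dvd_or_dvd_of_mul_eq_mul {u₁ v₁ u₂ v₂ : ℕ} (h : u₁ * v₁ = u₂ * v₂) (h0 : u₁ * v₁ ≠ 0)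
    (h₁ : ∀ q ∈ u₁.primeFactors, ∀ r ∈ v₁.primeFactors, q ≤ r)
    (h₂ : ∀ q ∈ u₂.primeFactors, ∀ r ∈ v₂.primeFactors, q ≤ r) :
    v₁ ∣ v₂ ∨ v₂ ∣ v₁ := by
  obtain ⟨-, hv₁⟩ := mul_ne_zero_iff.mp h0
  obtain ⟨-, hv₂⟩ := mul_ne_zero_iff.mp (h ▸ h0)
  by_contra! hne
  rw [← factorization_le_iff_dvd hv₁ hv₂, ← factorization_le_iff_dvd hv₂ hv₁,
    Finsupp.le_def, Finsupp.le_def] at hne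
  simp only [not_forall, not_le] at hne
  obtain ⟨⟨r, hr⟩, ⟨s, hs⟩⟩ := hne
  obtain ⟨hr₂, hr₁⟩ := mem_primeFactors_of_factorization_lt h h0 hr
  obtain ⟨hs₁, hs₂⟩ := mem_primeFactors_of_factorization_lt h.symm (h ▸ h0) hs
  have : r = s := le_antisymm (h₂ r hr₂ s hs₂) (h₁ s hs₁ r hr₁)
  subst this
  omega

theorem mul_minFac_le_of_dvd {a b : ℕ} (hab : a ∣ b) (hne : a ≠ b) (hb : b ≠ 0) :
    a * b.minFac ≤ b := by
  obtain ⟨c, rfl⟩ := hab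
  have hc1 : c ≠ 1 := by rintro rfl; simp at hne
  have hc0 : c ≠ 0 := by rintro rfl; simp at hb
  have hmin : (a * c).minFac ≤ c.minFac :=
    minFac_le_of_dvd (minFac_prime hc1).two_le ((minFac_dvd c).trans (dvd_mul_left c a))
  exact Nat.mul_le_mul_left a (hmin.trans (minFac_le (Nat.pos_of_ne_zero hc0)))

end Nat

/-- In the paper's notation, `v` is the smallest initial product of the decreasing prime
factorisation of `n` exceeding `M`, and `p` is the last prime used. -/
structure IsPrefixSplit (M : ℝ) (n u v p : ℕ) : Prop where
  eq_mul : n = u * v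
  prime : p.Prime
  dvd : p ∣ v
  le_of_mem_left : ∀ q ∈ u.primeFactors, q ≤ p
  le_of_mem_right : ∀ q ∈ v.primeFactors, p ≤ q
  lt_right : M < v
  right_le : (v : ℝ) ≤ M * p

namespace IsPrefixSplit

variable {M : ℝ} {n u v p : ℕ}

lemma right_ne_zero (hs : IsPrefixSplit M n u v p) : v ≠ 0 := by
  rintro rfl
  have hlt := hs.lt_right
  have hle := hs.right_le
  have hp : (0 : ℝ) < p := by exact_mod_cast hs.prime.pos
  push_cast at hlt hle
  nlinarith

lemma eq_minFac (hs : IsPrefixSplit M n u v p) : p = v.minFac := by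
  have hv1 : v ≠ 1 := by rintro rfl; exact hs.prime.one_lt.ne' (Nat.dvd_one.mp hs.dvd)
  refine le_antisymm (hs.le_of_mem_right _ ?_) (Nat.minFac_le_of_dvd hs.prime.two_le hs.dvd)
  exact Nat.mem_primeFactors.mpr ⟨Nat.minFac_prime hv1, Nat.minFac_dvd v, hs.right_ne_zero⟩

lemma left_le_right (hs : IsPrefixSplit M n u v p) :
    ∀ q ∈ u.primeFactors, ∀ r ∈ v.primeFactors, q ≤ r :=
  fun q hq r hr => (hs.le_of_mem_left q hq).trans (hs.le_of_mem_right r hr)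

lemma eq_of_dvd {u₁ v₁ p₁ u₂ v₂ p₂ : ℕ} (hs₁ : IsPrefixSplit M n u₁ v₁ p₁)
    (hs₂ : IsPrefixSplit M n u₂ v₂ p₂) (hdvd : v₁ ∣ v₂) : v₁ = v₂ := by
  by_contra hne
  have hle : ((v₁ * p₂ : ℕ) : ℝ) ≤ v₂ := by
    rw [hs₂.eq_minFac]
    exact_mod_cast Nat.mul_minFac_le_of_dvd hdvd hne hs₂.right_ne_zero
  have hp : (0 : ℝ) < p₂ := by exact_mod_cast hs₂.prime.pos
  push_cast at hle
  nlinarith [hs₁.lt_right, hs₂.right_le]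

theorem unique {u₁ v₁ p₁ u₂ v₂ p₂ : ℕ} (hn : n ≠ 0) (hs₁ : IsPrefixSplit M n u₁ v₁ p₁)
    (hs₂ : IsPrefixSplit M n u₂ v₂ p₂) : u₁ = u₂ ∧ v₁ = v₂ ∧ p₁ = p₂ := by
  have heq : u₁ * v₁ = u₂ * v₂ := hs₁.eq_mul.symm.trans hs₂.eq_mul
  have hv : v₁ = v₂ := by
    rcases Nat.dvd_or_dvd_of_mul_eq_mul heq (hs₁.eq_mul ▸ hn) hs₁.left_le_right
      hs₂.left_le_right with h | h
    · exact hs₁.eq_of_dvd hs₂ h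
    · exact (hs₂.eq_of_dvd hs₁ h).symm
  subst hv
  exact ⟨Nat.eq_of_mul_eq_mul_right (Nat.pos_of_ne_zero hs₁.right_ne_zero) heq, rfl,
    hs₁.eq_minFac.trans hs₂.eq_minFac.symm⟩

end IsPrefixSplit

theorem exists_isPrefixSplit {M : ℝ} (hM : 1 ≤ M) (n : ℕ) (hn : M < n) :
    ∃ u v p, IsPrefixSplit M n u v p := by
  induction n using Nat.strong_induction_on with
  | _ n ih =>
  have hn1 : n ≠ 1 := by rintro rfl; norm_num at hn; linarith
  have hq := Nat.minFac_prime hn1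
  obtain ⟨m, hnm⟩ := Nat.minFac_dvd n
  have hq0 : (0 : ℝ) < n.minFac := by exact_mod_cast hq.pos
  have hnm' : (n : ℝ) = n.minFac * m := by exact_mod_cast hnm
  by_cases hmM : (m : ℝ) ≤ M
  · refine ⟨1, n, n.minFac, (one_mul n).symm, hq, Nat.minFac_dvd n, by simp, ?_, hn, ?_⟩
    · exact fun q hq => Nat.minFac_le_of_dvd (Nat.prime_of_mem_primeFactors hq).two_le
        (Nat.dvd_of_mem_primeFactors hq)
    · rw [hnm']; nlinarith
  · rw [not_le] at hmM
    have hm0 : m ≠ 0 := by rintro rfl; norm_num at hmM; linarith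
    have hmn : m < n := by
      rw [hnm]; exact lt_mul_left (Nat.pos_of_ne_zero hm0) hq.one_lt
    obtain ⟨u, v, p, hs⟩ := ih m hmn hmM
    have hu0 : u ≠ 0 := by rintro rfl; simp [hs.eq_mul] at hm0
    have hqp : n.minFac ≤ p := Nat.minFac_le_of_dvd hs.prime.two_le
      (hs.dvd.trans ((Dvd.intro_left u hs.eq_mul.symm).trans (Dvd.intro_left _ hnm.symm)))
    refine ⟨n.minFac * u, v, p, hnm.trans (by rw [hs.eq_mul, mul_assoc]), hs.prime, hs.dvd, ?_,
      hs.le_of_mem_right, hs.lt_right, hs.right_le⟩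
    intro q hq'
    rw [Nat.primeFactors_mul hq.ne_zero hu0, hq.primeFactors, Finset.mem_union,
      Finset.mem_singleton] at hq'
    rcases hq' with rfl | hq'
    · exact hqp
    · exact hs.le_of_mem_left q hq'

theorem stmt3_general (y' y M : ℝ) (hy' : 1 ≤ y') (hy'y : y' < y) (hyM : y ≤ M)
    (n : ℕ) (hnM : M < (n : ℝ))
    (hsmooth : ∀ p ∈ n.primeFactors, y' ≤ (p : ℝ) ∧ (p : ℝ) ≤ y) :
    ∃! t : ℕ × ℕ × ℕ,
      0 < t.1 ∧ 0 < t.2.1 ∧ Nat.Prime t.2.2 ∧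
      n = t.1 * t.2.1 ∧
      y' ≤ (t.2.2 : ℝ) ∧ (t.2.2 : ℝ) ≤ y ∧
      t.2.2 ∣ t.2.1 ∧
      (∀ p ∈ t.1.primeFactors, y' ≤ (p : ℝ) ∧ (p : ℝ) ≤ (t.2.2 : ℝ)) ∧
      M < (t.2.1 : ℝ) ∧ (t.2.1 : ℝ) ≤ M * (t.2.2 : ℝ) ∧
      (∀ p ∈ t.2.1.primeFactors, (t.2.2 : ℝ) ≤ (p : ℝ) ∧ (p : ℝ) ≤ y) := by
  have hM : 1 ≤ M := by linarith
  have hn0 : n ≠ 0 := by rintro rfl; norm_num at hnM; linarith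
  obtain ⟨u, v, p, hs⟩ := exists_isPrefixSplit hM n hnM
  have hsmooth_of_dvd {d q : ℕ} (hd : d ∣ n) (hq : q ∈ d.primeFactors) :
      y' ≤ (q : ℝ) ∧ (q : ℝ) ≤ y :=
    hsmooth q (Nat.primeFactors_mono hd hn0 hq)
  have hu : u ∣ n := Dvd.intro v hs.eq_mul.symm
  have hv : v ∣ n := Dvd.intro_left u hs.eq_mul.symm
  have hp := hsmooth_of_dvd hv (Nat.mem_primeFactors.mpr ⟨hs.prime, hs.dvd, hs.right_ne_zero⟩)
  refine ⟨(u, v, p), ⟨Nat.pos_of_dvd_of_pos hu (Nat.pos_of_ne_zero hn0),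
    Nat.pos_of_ne_zero hs.right_ne_zero, hs.prime, hs.eq_mul, hp.1, hp.2, hs.dvd,
    fun q hq => ⟨(hsmooth_of_dvd hu hq).1, by exact_mod_cast hs.le_of_mem_left q hq⟩,
    hs.lt_right, hs.right_le,
    fun q hq => ⟨by exact_mod_cast hs.le_of_mem_right q hq, (hsmooth_of_dvd hv hq).2⟩⟩, ?_⟩
  rintro ⟨u', v', p'⟩ ⟨-, -, hp', heq, -, -, hdvd, hu', hMv, hvM, hv'⟩
  have hs' : IsPrefixSplit M n u' v' p' := ⟨heq, hp', hdvd,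
    fun q hq => by exact_mod_cast (hu' q hq).2, fun q hq => by exact_mod_cast (hv' q hq).1,
    hMv, hvM⟩
  obtain ⟨rfl, rfl, rfl⟩ := hs'.unique hn0 hs
  rfl

/-- Unique Vaughan-type factorisation of `[y',y]`-smooth numbers: if `1 ≤ y' < y ≤ M < x`,
and `n` is a positive integer with `M < n ≤ x` all of whose prime factors lie in `[y', y]`,
then there is a unique triple `(u, v, p)` with `u, v` positive, `p` prime, `n = u·v`,
`y' ≤ p ≤ y`, `p ∣ v`, all prime factors of `u` in `[y', p]`, `M < v ≤ M·p`, and all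
prime factors of `v` in `[p, y]`. -/
theorem stmt3 (y' y M x : ℝ) (hy' : 1 ≤ y') (hy'y : y' < y) (hyM : y ≤ M) (hMx : M < x)
    (n : ℕ) (hn : 0 < n) (hnM : M < (n : ℝ)) (hnx : (n : ℝ) ≤ x)
    (hsmooth : ∀ p ∈ n.primeFactors, y' ≤ (p : ℝ) ∧ (p : ℝ) ≤ y) :
    ∃! t : ℕ × ℕ × ℕ,
      0 < t.1 ∧ 0 < t.2.1 ∧ Nat.Prime t.2.2 ∧
      n = t.1 * t.2.1 ∧
      y' ≤ (t.2.2 : ℝ) ∧ (t.2.2 : ℝ) ≤ y ∧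
      t.2.2 ∣ t.2.1 ∧
      (∀ p ∈ t.1.primeFactors, y' ≤ (p : ℝ) ∧ (p : ℝ) ≤ (t.2.2 : ℝ)) ∧
      M < (t.2.1 : ℝ) ∧ (t.2.1 : ℝ) ≤ M * (t.2.2 : ℝ) ∧
      (∀ p ∈ t.2.1.primeFactors, (t.2.2 : ℝ) ≤ (p : ℝ) ∧ (p : ℝ) ≤ y) :=
  stmt3_general y' y M hy' hy'y hyM n hnM hsmooth
end
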